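/- Let t be an n-ary idempotent polymorphism of the digraph D. Then there exists a nonempty subset I ⊆ {1,…,n} such that for all a₁,…,aₙ ∈ {0,1,2}: t(a₁,…,aₙ) = 2 if and only if aᵢ = 2 for all i ∈ I. In particular, the restriction of t to {0,2}ⁿ takes values in {0,2} and equals the operation (a₁,…,aₙ) ↦ min_{i∈I} aᵢ on the two-element chain 0 < 2. -/

import Mathlib

/-!
Call a set `A` of coordinates accepted if `t` maps its `{0,2}`-indicator vector to `2`. The only
vertex that is both an out- and an in-neighbour of `2` in `D` is `2` itself, so `t a = 2` as soon
as `a` is sandwiched between two vectors that `t` maps to `2`. Suitable sandwiches with vectors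
using the value `1` show that `t a = 2` iff the set `{i | aᵢ = 2}` is accepted, and that the
accepted sets form an upward closed family closed under intersection. Such a family of finsets
consists of the supersets of its least member `I`, and `I ≠ ∅` because `t` fixes the constant
vector `0`.
-/

namespace DigraphHM10

/-- `f` is a polymorphism of the digraph `(V, E)`. -/
def IsPoly {V : Type*} (E : V → V → Prop) {n : ℕ} (f : (Fin n → V) → V) : Prop :=
  ∀ a b : Fin n → V, (∀ i, E (a i) (b i)) → E (f a) (f b)

/-- `f` is idempotent. -/
def IsIdem {V : Type*} {n : ℕ} (f : (Fin n → V) → V) : Prop :=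
  ∀ x : V, f (fun _ => x) = x

/-- The reflexive digraph `D` on `{0,1,2}` with non-loop edges
`0 → 1`, `1 → 0`, `1 → 2`, `2 → 0`. -/
def DEdge : Fin 3 → Fin 3 → Prop := fun a b =>
  a = b ∨ (a = 0 ∧ b = 1) ∨ (a = 1 ∧ b = 0) ∨ (a = 1 ∧ b = 2) ∨ (a = 2 ∧ b = 0)

theorem _root_.InfClosed.exists_eq_Ici_of_isUpperSet {α : Type*} [SemilatticeInf α]
    [WellFoundedLT α] {s : Set α} (hinf : InfClosed s) (hup : IsUpperSet s) (hs : s.Nonempty) :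
    ∃ a, s = Set.Ici a := by
  obtain ⟨a, ha⟩ := exists_minimal_of_wellFoundedLT (· ∈ s) hs
  refine ⟨a, Set.ext fun b => ⟨fun hb => ?_, fun hab => hup hab ha.prop⟩⟩
  exact (ha.le_of_le (hinf ha.prop hb) inf_le_left).trans inf_le_right

instance : DecidableRel DEdge := fun a b => by
  unfold DEdge
  infer_instance

theorem eq_two_of_dEdge_two_of_dEdge_two : ∀ {x : Fin 3}, DEdge 2 x → DEdge x 2 → x = 2 := by
  decide

theorem eq_zero_or_eq_two_of_dEdge_two : ∀ {x : Fin 3}, DEdge 2 x → x = 0 ∨ x = 2 := by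
  decide

theorem dEdge_two_of_eq_zero_or_eq_two : ∀ {x : Fin 3}, x = 0 ∨ x = 2 → DEdge 2 x := by
  decide

def twoOn {n : ℕ} (A : Finset (Fin n)) : Fin n → Fin 3 := fun i => if i ∈ A then 2 else 0

section Polymorphism

variable {n : ℕ} {t : (Fin n → Fin 3) → Fin 3}

@[simp]
theorem twoOn_univ : twoOn (Finset.univ : Finset (Fin n)) = fun _ => 2 :=
  funext fun _ => if_pos (Finset.mem_univ _)

@[simp]
theorem twoOn_empty : twoOn (∅ : Finset (Fin n)) = fun _ => 0 :=
  funext fun _ => if_neg (Finset.notMem_empty _)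

theorem twoOn_eq_zero_or_eq_two (A : Finset (Fin n)) (i : Fin n) :
    twoOn A i = 0 ∨ twoOn A i = 2 := by
  unfold twoOn
  split_ifs <;> simp

theorem IsPoly.apply_eq_two_of_sandwich (hpoly : IsPoly DEdge t) {a b c : Fin n → Fin 3}
    (hb : t b = 2) (hc : t c = 2) (hba : ∀ i, DEdge (b i) (a i))
    (hac : ∀ i, DEdge (a i) (c i)) :
    t a = 2 :=
  eq_two_of_dEdge_two_of_dEdge_two (hb ▸ hpoly b a hba) (hc ▸ hpoly a c hac)

theorem IsPoly.apply_eq_zero_or_eq_two (hpoly : IsPoly DEdge t) (hidem : IsIdem t)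
    {a : Fin n → Fin 3} (ha : ∀ i, a i = 0 ∨ a i = 2) : t a = 0 ∨ t a = 2 :=
  eq_zero_or_eq_two_of_dEdge_two <|
    hidem 2 ▸ hpoly _ a fun i => dEdge_two_of_eq_zero_or_eq_two (ha i)

theorem IsPoly.apply_twoOn_eq_two_of_sandwich (hpoly : IsPoly DEdge t) (hidem : IsIdem t)
    {A : Finset (Fin n)} {c : Fin n → Fin 3} (hc : t c = 2)
    (hAc : ∀ i, DEdge (twoOn A i) (c i)) :
    t (twoOn A) = 2 :=
  hpoly.apply_eq_two_of_sandwich (hidem 2) hc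
    (fun i => dEdge_two_of_eq_zero_or_eq_two (twoOn_eq_zero_or_eq_two A i)) hAc

theorem IsPoly.isUpperSet_twoOn (hpoly : IsPoly DEdge t) (hidem : IsIdem t) :
    IsUpperSet {A : Finset (Fin n) | t (twoOn A) = 2} := by
  intro A B hAB hA
  refine hpoly.apply_twoOn_eq_two_of_sandwich hidem hA fun i => ?_
  by_cases hiA : i ∈ A
  · simp [twoOn, hiA, hAB hiA, DEdge]
  · by_cases hiB : i ∈ B <;> simp [twoOn, hiA, hiB, DEdge]

theorem IsPoly.infClosed_twoOn (hpoly : IsPoly DEdge t) (hidem : IsIdem t) :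
    InfClosed {A : Finset (Fin n) | t (twoOn A) = 2} := by
  intro A hA B hB
  -- The value `1` on `A \ B` makes `u` an out-neighbour of `twoOn B` and an in-neighbour
  -- of `twoOn A`.
  set u : Fin n → Fin 3 := fun i => if i ∈ A then (if i ∈ B then 2 else 1) else 0
  have hu : t u = 2 := by
    refine hpoly.apply_eq_two_of_sandwich hB hA (fun i => ?_) (fun i => ?_) <;>
      by_cases hiA : i ∈ A <;> by_cases hiB : i ∈ B <;> simp [u, twoOn, hiA, hiB, DEdge]
  refine hpoly.apply_twoOn_eq_two_of_sandwich hidem hu fun i => ?_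
  by_cases hiA : i ∈ A <;> by_cases hiB : i ∈ B <;> simp [u, twoOn, hiA, hiB, DEdge]

theorem IsPoly.apply_eq_two_iff (hpoly : IsPoly DEdge t) (hidem : IsIdem t) (a : Fin n → Fin 3) :
    t a = 2 ↔ t (twoOn {i | a i = 2}) = 2 := by
  -- `b` is adjacent to `twoOn {i | a i = 2}` in both directions, and `a → b`.
  set b : Fin n → Fin 3 := fun i => if a i = 2 then 2 else 1
  have hlow : ∀ i, DEdge (twoOn {i | a i = 2} i) (a i) := fun i => by
    simp only [twoOn, Finset.mem_filter, Finset.mem_univ, true_and]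
    generalize a i = x
    revert x
    decide
  refine ⟨fun ha => hpoly.apply_twoOn_eq_two_of_sandwich hidem ha hlow, fun hA => ?_⟩
  have hb : t b = 2 := by
    refine hpoly.apply_eq_two_of_sandwich hA hA (fun i => ?_) (fun i => ?_) <;>
      by_cases h : a i = 2 <;> simp [b, twoOn, h, DEdge]
  refine hpoly.apply_eq_two_of_sandwich hA hb hlow fun i => ?_
  simp only [b]
  generalize a i = x
  revert x
  decide

end Polymorphism

/-- Every `n`-ary idempotent polymorphism `t` of `D` has a nonempty set `I` of
coordinates such that `t(a) = 2` iff `aᵢ = 2` for all `i ∈ I`; in particular, the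
restriction of `t` to `{0,2}ⁿ` takes values in `{0,2}` and equals the operation
`a ↦ min_{i ∈ I} aᵢ` on the two-element chain `0 < 2`. -/
theorem idem_poly_of_D_is_semilattice_term {n : ℕ}
    (t : (Fin n → Fin 3) → Fin 3) (hpoly : IsPoly DEdge t) (hidem : IsIdem t) :
    ∃ I : Finset (Fin n), I.Nonempty ∧
      (∀ a : Fin n → Fin 3, (t a = 2 ↔ ∀ i ∈ I, a i = 2)) ∧
      (∀ a : Fin n → Fin 3, (∀ i, a i = 0 ∨ a i = 2) →
        (t a = 0 ∨ t a = 2) ∧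
        t a = if ∀ i ∈ I, a i = 2 then (2 : Fin 3) else 0) := by
  have huniv : t (twoOn Finset.univ) = 2 := by simpa using hidem 2
  obtain ⟨I, hI⟩ := (hpoly.infClosed_twoOn hidem).exists_eq_Ici_of_isUpperSet
    (hpoly.isUpperSet_twoOn hidem) ⟨_, huniv⟩
  have hmem : ∀ A, t (twoOn A) = 2 ↔ I ⊆ A := Set.ext_iff.1 hI
  have hkey : ∀ a : Fin n → Fin 3, t a = 2 ↔ ∀ i ∈ I, a i = 2 := fun a => by
    rw [hpoly.apply_eq_two_iff hidem, hmem]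
    simp [Finset.subset_iff]
  have hI_nonempty : I.Nonempty := by
    rw [Finset.nonempty_iff_ne_empty]
    rintro rfl
    simpa [hidem 0] using (hmem ∅).2 subset_rfl
  refine ⟨I, hI_nonempty, hkey, fun a ha => ⟨hpoly.apply_eq_zero_or_eq_two hidem ha, ?_⟩⟩
  split_ifs with h
  · exact (hkey a).2 h
  · exact (hpoly.apply_eq_zero_or_eq_two hidem ha).resolve_right (mt (hkey a).1 h)

end DigraphHM10
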